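/- arXiv:2603.17003 — 3 statements merged into one kernel-verified Lean document; each statement's English description precedes it below -/
import Mathlib

section
/- Let E be a real normed space, h : E → ℝ, x : ℝ → E a trajectory, r : ℝ → ℝ differentiable, γ : ℝ → ℝ Lipschitz with γ(0) = 0, and T > 0. Suppose: (a) the map t ↦ h(x(t)) is differentiable on [0, T]; (b) h(x(0)) + r(0) ≥ 0; (c) r(T) = 0; and (d) for every t ∈ [0, T], (d/dt)[h(x(t))] + r'(t) ≥ -γ(h(x(t)) + r(t)). Then h(x(t)) + r(t) ≥ 0 for every t ∈ [0, T]; in particular the trajectory stays in the constricting tube C̃(t) = {y : h(y) + r(t) ≥ 0} for all t ∈ [0, T], and h(x(T)) ≥ 0, i.e. x(T) lies in the target set C = {y : h(y) ≥ 0} at the prescribed time T (Theorem 1(i)). -/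
/-!
Along the trajectory, the tube margin `v t = h (x t) + r t` satisfies `v' ≥ -γ v`, and on any
interval where `v < 0` the Lipschitz bound `γ v ≤ K |v|` turns this into `v' ≥ K v`, so
`v t * exp (-K t)` is nondecreasing there. If `v` became negative at some `t₁`, then on
`(t₀, t₁)`, with `t₀` the last time before `t₁` at which `v ≥ 0`, this monotonicity would give
`0 ≤ v t₀ * exp (-K t₀) ≤ v t₁ * exp (-K t₁) < 0`. Hence `v ≥ 0` on `[0, T]`, and at `T`,
where `r T = 0`, this reads `h (x T) ≥ 0`.
-/

open Set Real

theorem LipschitzWith.mul_le_neg_apply_of_nonpos {γ : ℝ → ℝ} {K : NNReal}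
    (hγ : LipschitzWith K γ) (hγ0 : γ 0 = 0) {y : ℝ} (hy : y ≤ 0) : K * y ≤ -γ y := by
  have hdist := hγ.dist_le_mul y 0
  rw [hγ0, dist_zero_right, dist_zero_right, norm_eq_abs, norm_eq_abs, abs_of_nonpos hy] at hdist
  linarith [le_abs_self (γ y)]

theorem monotoneOn_mul_exp_neg_mul {v v' : ℝ → ℝ} {K c d : ℝ}
    (hv : ContinuousOn v (Icc c d)) (hv' : ∀ t ∈ Ioo c d, HasDerivAt v (v' t) t)
    (hK : ∀ t ∈ Ioo c d, K * v t ≤ v' t) :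
    MonotoneOn (fun t => v t * exp (-K * t)) (Icc c d) := by
  have hexp : ∀ t, HasDerivAt (fun s => exp (-K * s)) (exp (-K * t) * (-K * 1)) t := fun t =>
    ((hasDerivAt_id t).const_mul (-K)).exp
  refine monotoneOn_of_hasDerivWithinAt_nonneg (convex_Icc c d)
    (hv.mul (continuous_exp.comp (continuous_const.mul continuous_id)).continuousOn)
    (f' := fun t => (v' t - K * v t) * exp (-K * t)) ?_ ?_
  · intro t ht
    rw [interior_Icc] at ht
    exact (((hv' t ht).mul (hexp t)).congr_deriv (by ring)).hasDerivWithinAt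
  · intro t ht
    rw [interior_Icc] at ht
    exact mul_nonneg (sub_nonneg.mpr (hK t ht)) (exp_pos _).le

theorem nonneg_of_neg_lipschitz_le_deriv {v v' γ : ℝ → ℝ} {K : NNReal}
    (hγ : LipschitzWith K γ) (hγ0 : γ 0 = 0) {a b : ℝ}
    (hv : ContinuousOn v (Icc a b)) (hv' : ∀ t ∈ Ioo a b, HasDerivAt v (v' t) t)
    (hineq : ∀ t ∈ Ioo a b, -γ (v t) ≤ v' t) (ha : 0 ≤ v a) :
    ∀ t ∈ Icc a b, 0 ≤ v t := by
  intro t₁ ht₁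
  by_contra! hneg
  set S := Icc a t₁ ∩ v ⁻¹' Ici 0
  have hSub : Icc a t₁ ⊆ Icc a b := Icc_subset_Icc_right ht₁.2
  have hS : IsCompact S := isCompact_Icc.of_isClosed_subset
    ((hv.mono hSub).preimage_isClosed_of_isClosed isClosed_Icc isClosed_Ici) inter_subset_left
  obtain ⟨⟨hat₀, ht₀t₁⟩, hvt₀⟩ : sSup S ∈ S := hS.sSup_mem ⟨a, ⟨le_rfl, ht₁.1⟩, ha⟩
  set t₀ := sSup S
  have hIoo : Ioo t₀ t₁ ⊆ Ioo a b := Ioo_subset_Ioo hat₀ ht₁.2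
  have hvneg : ∀ t ∈ Ioo t₀ t₁, v t < 0 := fun t ht => by
    by_contra! hvt
    exact (le_csSup hS.bddAbove ⟨⟨hat₀.trans ht.1.le, ht.2.le⟩, hvt⟩).not_gt ht.1
  have hmono := monotoneOn_mul_exp_neg_mul (hv.mono (Icc_subset_Icc hat₀ ht₁.2))
    (fun t ht => hv' t (hIoo ht)) (K := K) fun t ht =>
      (hγ.mul_le_neg_apply_of_nonpos hγ0 (hvneg t ht).le).trans (hineq t (hIoo ht))
  have hle := hmono ⟨le_rfl, ht₀t₁⟩ ⟨ht₀t₁, le_rfl⟩ ht₀t₁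
  have h₀ : 0 ≤ v t₀ * exp (-K * t₀) := mul_nonneg hvt₀ (exp_pos _).le
  have h₁ : v t₁ * exp (-K * t₁) < 0 := mul_neg_of_neg_of_pos hneg (exp_pos _)
  simp only at hle
  linarith

theorem prescribed_time_recovery_general
    {E : Type*}
    (h : E → ℝ) (x : ℝ → E) (r r' : ℝ → ℝ) (hx' : ℝ → ℝ)
    (γ : ℝ → ℝ) (K : NNReal) (hγ : LipschitzWith K γ) (hγ0 : γ 0 = 0)
    (T : ℝ) (hT : 0 < T)
    (hder : ∀ t ∈ Set.Icc (0 : ℝ) T, HasDerivAt (fun s => h (x s)) (hx' t) t)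
    (hrder : ∀ t : ℝ, HasDerivAt r (r' t) t)
    (hinit : h (x 0) + r 0 ≥ 0)
    (hrT : r T = 0)
    (hcbf : ∀ t ∈ Set.Icc (0 : ℝ) T, hx' t + r' t ≥ -γ (h (x t) + r t)) :
    (∀ t ∈ Set.Icc (0 : ℝ) T, x t ∈ {y : E | h y + r t ≥ 0}) ∧
      x T ∈ {y : E | h y ≥ 0} := by
  have hmargin : ∀ t ∈ Icc 0 T, HasDerivAt (fun s => h (x s) + r s) (hx' t + r' t) t :=
    fun t ht => (hder t ht).add (hrder t)
  have htube : ∀ t ∈ Icc 0 T, 0 ≤ h (x t) + r t :=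
    nonneg_of_neg_lipschitz_le_deriv hγ hγ0
      (fun t ht => (hmargin t ht).continuousAt.continuousWithinAt)
      (fun t ht => hmargin t (Ioo_subset_Icc_self ht))
      (fun t ht => hcbf t (Ioo_subset_Icc_self ht)) hinit
  refine ⟨htube, ?_⟩
  simpa [hrT] using htube T ⟨hT.le, le_rfl⟩

/-- **Theorem 1(i): prescribed-time recovery via tube invariance.**
If `h ∘ x` is differentiable on `[0, T]` (with derivative `hx'`), the schedule `r`
is differentiable (with derivative `r'`), `γ` is Lipschitz with `γ 0 = 0`,
`h (x 0) + r 0 ≥ 0`, `r T = 0`, and the constricting CBF inequality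
`(d/dt)[h (x t)] + r' t ≥ -γ (h (x t) + r t)` holds on `[0, T]`, then the trajectory
stays in the constricting tube on `[0, T]` and `h (x T) ≥ 0`. -/
theorem prescribed_time_recovery
    {E : Type*} [NormedAddCommGroup E] [NormedSpace ℝ E]
    (h : E → ℝ) (x : ℝ → E) (r r' : ℝ → ℝ) (hx' : ℝ → ℝ)
    (γ : ℝ → ℝ) (K : NNReal) (hγ : LipschitzWith K γ) (hγ0 : γ 0 = 0)
    (T : ℝ) (hT : 0 < T)
    (hder : ∀ t ∈ Set.Icc (0 : ℝ) T, HasDerivAt (fun s => h (x s)) (hx' t) t)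
    (hrder : ∀ t : ℝ, HasDerivAt r (r' t) t)
    (hinit : h (x 0) + r 0 ≥ 0)
    (hrT : r T = 0)
    (hcbf : ∀ t ∈ Set.Icc (0 : ℝ) T, hx' t + r' t ≥ -γ (h (x t) + r t)) :
    (∀ t ∈ Set.Icc (0 : ℝ) T, x t ∈ {y : E | h y + r t ≥ 0}) ∧
      x T ∈ {y : E | h y ≥ 0} :=
  prescribed_time_recovery_general h x r r' hx' γ K hγ hγ0 T hT hder hrder hinit hrT hcbf
end

section
/- Let E be a real normed space, h : E → ℝ, x : ℝ → E a trajectory, γ : ℝ → ℝ Lipschitz with γ(0) = 0, and T ≥ 0. Suppose t ↦ h(x(t)) is differentiable on [T, ∞), h(x(T)) ≥ 0, and for every t ≥ T, (d/dt)[h(x(t))] ≥ -γ(h(x(t))). Then h(x(t)) ≥ 0 for all t ≥ T, i.e. the target set C = {y : h(y) ≥ 0} is forward invariant along the trajectory after the deadline (Theorem 1(ii)). -/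
/-- **Theorem 1(ii): forward invariance after the deadline.**
If `h ∘ x` is differentiable on `[T, ∞)` (with derivative `hx'`), `γ` is Lipschitz with
`γ 0 = 0`, `h (x T) ≥ 0`, and `(d/dt)[h (x t)] ≥ -γ (h (x t))` for all `t ≥ T`, then
`h (x t) ≥ 0` for all `t ≥ T`, i.e. the target set `C = {y | h y ≥ 0}` is forward
invariant along the trajectory after the deadline. -/
theorem forward_invariance_after_deadline
    {E : Type*} [NormedAddCommGroup E] [NormedSpace ℝ E]
    (h : E → ℝ) (x : ℝ → E) (hx' : ℝ → ℝ)
    (γ : ℝ → ℝ) (K : NNReal) (hγ : LipschitzWith K γ) (hγ0 : γ 0 = 0)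
    (T : ℝ) (hT : 0 ≤ T)
    (hder : ∀ t ∈ Set.Ici T, HasDerivAt (fun s => h (x s)) (hx' t) t)
    (hinit : h (x T) ≥ 0)
    (hcbf : ∀ t ∈ Set.Ici T, hx' t ≥ -γ (h (x t))) :
    ∀ t ∈ Set.Ici T, x t ∈ {y : E | h y ≥ 0} := by
  set v : ℝ → ℝ := fun s => h (x s) with hv
  intro t1 ht1
  by_contra hneg
  simp only [Set.mem_setOf_eq, not_le, ge_iff_le] at hneg
  have hvt1 : v t1 < 0 := hneg
  have hTt1 : T ≤ t1 := ht1
  -- continuity of v on [T, ∞)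
  have hcont : ∀ s ∈ Set.Ici T, ContinuousAt v s := fun s hs =>
    (hder s hs).continuousAt
  -- the set of times in [T, t1] where v ≥ 0
  set S : Set ℝ := Set.Icc T t1 ∩ {s | 0 ≤ v s} with hS
  have hSsub : S ⊆ Set.Icc T t1 := Set.inter_subset_left
  have hSne : S.Nonempty := ⟨T, ⟨le_refl T, hTt1⟩, hinit⟩
  have hSbdd : BddAbove S := ⟨t1, fun s hs => (hSsub hs).2⟩
  have hSclosed : IsClosed S := by
    have hvc : ContinuousOn v (Set.Icc T t1) := fun s hs =>
      (hcont s hs.1).continuousWithinAt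
    exact hvc.preimage_isClosed_of_isClosed isClosed_Icc isClosed_Ici
  set t0 : ℝ := sSup S with ht0
  have ht0S : t0 ∈ S := hSclosed.csSup_mem hSne hSbdd
  have ht0T : T ≤ t0 := (hSsub ht0S).1
  have ht0le : t0 ≤ t1 := (hSsub ht0S).2
  have ht0v : 0 ≤ v t0 := ht0S.2
  have ht0lt : t0 < t1 := lt_of_le_of_ne ht0le (by
    intro hEq
    rw [hEq] at ht0v
    exact absurd hvt1 (not_lt.2 ht0v))
  -- on (t0, t1], v < 0
  have hvneg : ∀ s ∈ Set.Ioc t0 t1, v s < 0 := by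
    intro s hs
    by_contra hge
    push_neg at hge
    have : s ∈ S := ⟨⟨le_trans ht0T hs.1.le, hs.2⟩, hge⟩
    exact absurd (le_csSup hSbdd this) (not_le.2 hs.1)
  -- v t0 ≤ 0 by right continuity
  have ht0v' : v t0 ≤ 0 := by
    have htend : Filter.Tendsto v (nhdsWithin t0 (Set.Ioi t0)) (nhds (v t0)) :=
      ((hcont t0 ht0T).tendsto).mono_left nhdsWithin_le_nhds
    have hev : ∀ᶠ s in nhdsWithin t0 (Set.Ioi t0), v s ≤ 0 := by
      filter_upwards [Ioc_mem_nhdsGT_of_mem ⟨le_refl t0, ht0lt⟩] with s hs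
      exact (hvneg s hs).le
    exact le_of_tendsto htend hev
  have ht0v0 : v t0 = 0 := le_antisymm ht0v' ht0v
  -- v ≤ 0 on [t0, t1]
  have hvle : ∀ s ∈ Set.Icc t0 t1, v s ≤ 0 := by
    intro s hs
    rcases eq_or_lt_of_le hs.1 with hEq | hlt
    · rw [← hEq]; exact ht0v'
    · exact (hvneg s ⟨hlt, hs.2⟩).le
  -- Grönwall on -v
  have hgron := le_gronwallBound_of_liminf_deriv_right_le
    (f := fun s => -(v s)) (f' := fun s => -(hx' s)) (δ := 0) (K := (K : ℝ)) (ε := 0)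
    (a := t0) (b := t1)
    (fun s hs => ((hcont s (le_trans ht0T hs.1)).continuousWithinAt).neg)
    (fun s hs r hr => by
      have hd : HasDerivWithinAt (fun u => -(v u)) (-(hx' s)) (Set.Ici s) s :=
        ((hder s (le_trans ht0T hs.1)).neg).hasDerivWithinAt
      exact hd.liminf_right_slope_le hr)
    (by simp [ht0v0])
    (fun s hs => by
      have hs' : T ≤ s := le_trans ht0T hs.1
      have h1 : -(hx' s) ≤ γ (v s) := by
        have := hcbf s hs'
        linarith
      have h2 : γ (v s) ≤ (K : ℝ) * |v s| := by
        have := hγ.dist_le_mul (v s) 0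
        rw [Real.dist_eq, Real.dist_eq, hγ0, sub_zero, sub_zero] at this
        calc γ (v s) ≤ |γ (v s)| := le_abs_self _
          _ ≤ (K : ℝ) * |v s| := this
      have h3 : |v s| = -(v s) :=
        abs_of_nonpos (hvle s ⟨hs.1, hs.2.le⟩)
      rw [h3] at h2
      show -(hx' s) ≤ (K : ℝ) * (-(v s)) + 0
      linarith)
  have := hgron t1 ⟨ht0lt.le, le_refl t1⟩
  rw [gronwallBound_ε0_δ0] at this
  have h4 : -(v t1) ≤ 0 := this
  linarith
end

section
/- Let n, m ≥ 1, let S be a nonempty set of states in EuclideanSpace ℝ (Fin n), let a : S → ℝ and b : S → EuclideanSpace ℝ (Fin m) be arbitrary functions, let u_max ≥ 0, and define the barrier authority σ(x) = ‖b(x)‖·u_max + a(x). Assume the image σ(S) is bounded below, and let r₀ > 0 and T > 0. Then the following are equivalent: (1) for every x ∈ S there exists u with ‖u‖ ≤ u_max and a(x) + ⟪b(x), u⟫ ≥ r₀/T; (2) r₀/T ≤ inf over x ∈ S of σ(x). Moreover, writing σ_min = inf over x ∈ S of σ(x), if σ_min > 0 then these are also equivalent to T ≥ r₀/σ_min (Theorem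 2(ii), global feasibility for the linear schedule). -/
open RealInnerProductSpace

/-- **Theorem 2(ii): global feasibility for the linear schedule.**
Over a nonempty set `S` of states with drift `a x` and control direction `b x`, with
barrier authority `σ x = ‖b x‖ * u_max + a x` bounded below on `S`: the constricting-CBF
constraint with constant demand `r₀ / T` is feasible at every `x ∈ S` iff
`r₀ / T ≤ sInf (σ '' S)`; and if `σ_min = sInf (σ '' S) > 0`, these are further
equivalent to `T ≥ r₀ / σ_min`. -/
theorem global_feasibility_linear_schedule
    (n m : ℕ) (hn : 1 ≤ n) (hm : 1 ≤ m)
    (S : Set (EuclideanSpace ℝ (Fin n))) (hS : S.Nonempty)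
    (a : EuclideanSpace ℝ (Fin n) → ℝ)
    (b : EuclideanSpace ℝ (Fin n) → EuclideanSpace ℝ (Fin m))
    (u_max : ℝ) (hu : 0 ≤ u_max)
    (σ : EuclideanSpace ℝ (Fin n) → ℝ)
    (hσ : ∀ x, σ x = ‖b x‖ * u_max + a x)
    (hbdd : BddBelow (σ '' S))
    (r₀ T : ℝ) (hr₀ : 0 < r₀) (hT : 0 < T) :
    ((∀ x ∈ S, ∃ u : EuclideanSpace ℝ (Fin m), ‖u‖ ≤ u_max ∧ a x + ⟪b x, u⟫ ≥ r₀ / T) ↔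
        r₀ / T ≤ sInf (σ '' S)) ∧
      (0 < sInf (σ '' S) →
        ((∀ x ∈ S, ∃ u : EuclideanSpace ℝ (Fin m), ‖u‖ ≤ u_max ∧ a x + ⟪b x, u⟫ ≥ r₀ / T) ↔
          T ≥ r₀ / sInf (σ '' S))) := by
  -- pointwise feasibility ↔ r₀/T ≤ σ x
  have key : ∀ x, (∃ u : EuclideanSpace ℝ (Fin m), ‖u‖ ≤ u_max ∧ a x + ⟪b x, u⟫ ≥ r₀ / T)
      ↔ r₀ / T ≤ σ x := by
    intro x
    rw [hσ x]
    constructor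
    · rintro ⟨u, hu1, hu2⟩
      have h1 : ⟪b x, u⟫ ≤ ‖b x‖ * u_max := by
        calc ⟪b x, u⟫ ≤ ‖b x‖ * ‖u‖ := real_inner_le_norm _ _
          _ ≤ ‖b x‖ * u_max := by
            exact mul_le_mul_of_nonneg_left hu1 (norm_nonneg _)
      linarith
    · intro h
      by_cases hb : b x = 0
      · refine ⟨0, by simpa using hu, ?_⟩
        simp [hb] at h ⊢
        linarith
      · refine ⟨(u_max / ‖b x‖) • b x, ?_, ?_⟩
        · rw [norm_smul]
          have hbp : (0:ℝ) < ‖b x‖ := norm_pos_iff.mpr hb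
          rw [Real.norm_eq_abs, abs_div, abs_of_nonneg hu, abs_of_pos hbp,
            div_mul_cancel₀ _ (ne_of_gt hbp)]
        · rw [real_inner_smul_right, real_inner_self_eq_norm_sq]
          have hbp : (0:ℝ) < ‖b x‖ := norm_pos_iff.mpr hb
          have : u_max / ‖b x‖ * ‖b x‖ ^ 2 = ‖b x‖ * u_max := by
            field_simp
          rw [this]; linarith
  have main : (∀ x ∈ S, ∃ u : EuclideanSpace ℝ (Fin m), ‖u‖ ≤ u_max ∧ a x + ⟪b x, u⟫ ≥ r₀ / T)
      ↔ r₀ / T ≤ sInf (σ '' S) := by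
    constructor
    · intro h
      apply le_csInf (hS.image σ)
      rintro y ⟨x, hx, rfl⟩
      exact (key x).mp (h x hx)
    · intro h x hx
      exact (key x).mpr (h.trans (csInf_le hbdd ⟨x, hx, rfl⟩))
  refine ⟨main, fun hpos => main.trans ?_⟩
  rw [ge_iff_le, div_le_iff₀ hpos, div_le_iff₀ hT, mul_comm]
end
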